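/- arXiv:2004.12778 — 4 statements merged into one kernel-verified Lean document; each statement's English description precedes it below -/
import Mathlib

section
/- Let V and L be real Hilbert spaces, a : L × V → ℝ a continuous bilinear form satisfying the inf-sup condition sup_{v ∈ L, v ≠ 0} a(v,u)/‖v‖ ≥ α‖u‖ for all u ∈ V (with α > 0), and suppose the only v ∈ L with a(v,u) = 0 for all u ∈ V is v = 0. Then for every continuous linear functional l on L there exists a unique u ∈ V with a(v,u) = l(v) for all v ∈ L, and ‖u‖ ≤ (1/α)‖l‖. -/
/-!
Let `T : V → L` send `u` to the Riesz representative of `a(·, u)`, so that `⟪T u, v⟫ = a(v, u)`.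
The inf-sup condition gives `α ‖u‖ ≤ ‖a(·, u)‖ = ‖T u‖`, so `T` is antilipschitz and has closed
range; the orthogonal complement of that range consists of the `v` with `a(v, ·) = 0`, hence is
trivial, and `T` is surjective. Solving `T u = R l`, with `R l` the Riesz representative of `l`,
gives the solution; the lower bound gives its norm estimate and the injectivity of `T` uniqueness.
-/

open RealInnerProductSpace NNReal

namespace ContinuousLinearMap

variable {L V : Type*}

theorem iSup_div_norm_le_opNorm [SeminormedAddCommGroup L] [NormedSpace ℝ L]
    (f : L →L[ℝ] ℝ) : ⨆ v : L, f v / ‖v‖ ≤ ‖f‖ :=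
  ciSup_le fun v =>
    div_le_of_le_mul₀ (norm_nonneg v) (norm_nonneg f) ((le_abs_self _).trans (f.le_opNorm v))

variable [NormedAddCommGroup V] [NormedSpace ℝ V]

theorem norm_le_of_inf_sup [SeminormedAddCommGroup L] [NormedSpace ℝ L]
    (a : L →L[ℝ] V →L[ℝ] ℝ) {α : ℝ} (hα : 0 < α)
    (hinf : ∀ u : V, α * ‖u‖ ≤ ⨆ v : L, a v u / ‖v‖) (u : V) :
    ‖u‖ ≤ 1 / α * ‖a.flip u‖ := by
  rw [one_div_mul_eq_div, le_div_iff₀' hα]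
  exact (hinf u).trans (a.flip u).iSup_div_norm_le_opNorm

theorem surjective_flip_of_injective
    [NormedAddCommGroup L] [InnerProductSpace ℝ L] [CompleteSpace L] [CompleteSpace V]
    (a : L →L[ℝ] V →L[ℝ] ℝ) (hinj : Function.Injective a) {K : ℝ≥0}
    (hanti : AntilipschitzWith K a.flip) : Function.Surjective a.flip := by
  let R := (InnerProductSpace.toDual ℝ L).symm
  let T : V →L[ℝ] L := R.toContinuousLinearEquiv.toContinuousLinearMap ∘L a.flip
  have inner_T : ∀ u v, ⟪T u, v⟫ = a v u := by
    simp [T, R, InnerProductSpace.toDual_symm_apply]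
  have : CompleteSpace T.range := (R.antilipschitz.comp hanti).completeSpace_range_clm
  have range_T : T.range = ⊤ := by
    rw [← Submodule.orthogonal_eq_bot_iff, Submodule.eq_bot_iff]
    intro v hv
    refine hinj (ext fun u => ?_)
    rw [← inner_T, map_zero, zero_apply]
    exact hv (T u) ⟨u, rfl⟩
  intro l
  obtain ⟨u, hu⟩ := LinearMap.range_eq_top.1 range_T (R l)
  exact ⟨u, R.injective hu⟩

end ContinuousLinearMap

/-- Nečas' theorem (Banach–Nečas–Babuška) in real Hilbert spaces: if the continuous
bilinear form `a` satisfies the inf-sup condition with constant `α > 0` and the only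
`v` annihilating `a(v, ·)` is `v = 0`, then for every continuous linear functional `l`
on `L` the variational problem has a unique solution `u` with `‖u‖ ≤ (1/α)‖l‖`. -/
theorem necas_wellposedness {L V : Type*}
    [NormedAddCommGroup L] [InnerProductSpace ℝ L] [CompleteSpace L]
    [NormedAddCommGroup V] [InnerProductSpace ℝ V] [CompleteSpace V]
    (a : L →L[ℝ] V →L[ℝ] ℝ) (α : ℝ) (hα : 0 < α)
    (hinf : ∀ u : V, α * ‖u‖ ≤ ⨆ v : L, a v u / ‖v‖)
    (hker : ∀ v : L, (∀ u : V, a v u = 0) → v = 0)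
    (l : L →L[ℝ] ℝ) :
    ∃ u : V, (∀ v : L, a v u = l v) ∧ ‖u‖ ≤ (1 / α) * ‖l‖ ∧
      ∀ u' : V, (∀ v : L, a v u' = l v) → u' = u := by
  have hbound := a.norm_le_of_inf_sup hα hinf
  have hanti : AntilipschitzWith ⟨1 / α, by positivity⟩ a.flip :=
    a.flip.antilipschitz_of_bound hbound
  have hinj : Function.Injective a := (injective_iff_map_eq_zero a).2 fun v hv =>
    hker v fun u => by rw [hv]; rfl
  obtain ⟨u, hu⟩ := a.surjective_flip_of_injective hinj hanti l
  have hsol : ∀ v, a v u = l v := DFunLike.congr_fun hu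
  exact ⟨u, hsol, hu ▸ hbound u, fun u' hu' =>
    hanti.injective (ContinuousLinearMap.ext fun v => (hu' v).trans (hsol v).symm)⟩
end

section
/- Let V and L be real Hilbert spaces and a : L × V → ℝ a continuous bilinear form. If for every l ∈ L' the problem a(v,u) = l(v) for all v ∈ L has a unique solution u ∈ V satisfying ‖u‖ ≤ (1/α)‖l‖, then a satisfies the inf-sup condition sup_{v ≠ 0} a(v,u)/‖v‖_L ≥ α‖u‖_V for all u ∈ V. -/
/-- Converse direction of Nečas' theorem: if for every continuous linear functional
`l` on `L` the variational problem `a(v,u) = l(v)` has a unique solution `u` with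
`‖u‖ ≤ (1/α)‖l‖`, then the bilinear form `a` satisfies the inf-sup condition. -/
theorem necas_converse_infSup {L V : Type*}
    [NormedAddCommGroup L] [InnerProductSpace ℝ L] [CompleteSpace L]
    [NormedAddCommGroup V] [InnerProductSpace ℝ V] [CompleteSpace V]
    (a : L →L[ℝ] V →L[ℝ] ℝ) (α : ℝ) (hα : 0 < α)
    (hwp : ∀ l : L →L[ℝ] ℝ, ∃ u : V, (∀ v : L, a v u = l v) ∧ ‖u‖ ≤ (1 / α) * ‖l‖ ∧
      ∀ u' : V, (∀ v : L, a v u' = l v) → u' = u) :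
    ∀ u : V, α * ‖u‖ ≤ ⨆ v : L, a v u / ‖v‖ := by
  intro u
  set l : L →L[ℝ] ℝ := a.flip u with hl
  have hlv : ∀ v : L, l v = a v u := fun v => rfl
  obtain ⟨u₀, hsol, hbound, huniq⟩ := hwp l
  have hu : u = u₀ := huniq u (fun v => rfl)
  have hαu : α * ‖u‖ ≤ ‖l‖ := by
    rw [hu]
    have h := hbound
    calc α * ‖u₀‖ ≤ α * ((1 / α) * ‖l‖) := by
          exact mul_le_mul_of_nonneg_left h (le_of_lt hα)
      _ = ‖l‖ := by field_simp
  -- bounded above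
  have hbdd : BddAbove (Set.range fun v : L => a v u / ‖v‖) := by
    refine ⟨‖a‖ * ‖u‖, ?_⟩
    rintro x ⟨v, rfl⟩
    rcases eq_or_ne v 0 with rfl | hv
    · simp [mul_nonneg (norm_nonneg a) (norm_nonneg u)]
    · have hvpos : (0:ℝ) < ‖v‖ := norm_pos_iff.mpr hv
      rw [div_le_iff₀ hvpos]
      calc a v u ≤ |a v u| := le_abs_self _
        _ = ‖a v u‖ := rfl
        _ ≤ ‖a v‖ * ‖u‖ := (a v).le_opNorm u
        _ ≤ ‖a‖ * ‖v‖ * ‖u‖ := by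
            exact mul_le_mul_of_nonneg_right (a.le_opNorm v) (norm_nonneg u)
        _ = ‖a‖ * ‖u‖ * ‖v‖ := by ring
  have hsup0 : (0:ℝ) ≤ ⨆ v : L, a v u / ‖v‖ := by
    have := le_ciSup hbdd (0 : L)
    simpa using this
  have hle : ‖l‖ ≤ ⨆ v : L, a v u / ‖v‖ := by
    refine l.opNorm_le_bound hsup0 ?_
    intro v
    rcases eq_or_ne v 0 with rfl | hv
    · simp [hsup0]
    · have hvpos : (0:ℝ) < ‖v‖ := norm_pos_iff.mpr hv
      rw [← div_le_iff₀ hvpos]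
      rcases abs_cases (l v) with ⟨he, _⟩ | ⟨he, _⟩
      · have : a v u / ‖v‖ ≤ ⨆ w : L, a w u / ‖w‖ := le_ciSup hbdd v
        calc ‖l v‖ / ‖v‖ = a v u / ‖v‖ := by
              rw [Real.norm_eq_abs, he, hlv]
          _ ≤ _ := this
      · have : a (-v) u / ‖-v‖ ≤ ⨆ w : L, a w u / ‖w‖ := le_ciSup hbdd (-v)
        calc ‖l v‖ / ‖v‖ = a (-v) u / ‖-v‖ := by
              rw [Real.norm_eq_abs, he, hlv]
              simp
          _ ≤ _ := this
  linarith
end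

section
/- Under the hypotheses of the well-posed advection formulation (Ω bounded Lipschitz, ∇·β = 0, ρ ≥ ρ₀ > 0, dist(Γ₋,Γ₊) > 0), for every u in the graph space V = W (with trace u|_{Γ₋} ∈ L²(Γ₋;|n·β|)), choosing the test tuple v̂ = (u, tr₋ u) gives a(v̂, u) = (1/2)∫_{∂Ω}|n·β|u² + ∫_Ω ρu² ≥ ‖v̂‖_L ‖ρ^{1/2}u‖_{L²(Ω)}, where ‖v̂‖_L = (∫_Ω ρu² + ∫_{Γ₋}|n·β| u²)^{1/2}. -/
/-!
Since `div β = 0`, `div (u² β) = 2 u (∇u · β)`, so the Gauss–Green formula turns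
`∫_Ω u (∇u · β)` into half the boundary flux `∫ ⟪n, β⟫ u² dσ`. Removing the inflow part, where
`⟪n, β⟫ < 0`, flips the sign of the flux there, which gives `½ ∫ |n·β| u² dσ + ∫_Ω ρ u²`.
With `A = ∫_Ω ρ u²` and `B` the inflow part of `∫ |n·β| u² dσ`, the inequality is
`√((A + B) A) ≤ A + B / 2 ≤ ½ ∫ |n·β| u² dσ + A`.
-/

open MeasureTheory RealInnerProductSpace

section SignSplit

variable {X : Type*} [MeasurableSpace X] {μ : Measure X} {g : X → ℝ} {s : Set X}

theorem MeasureTheory.Integrable.min_zero (hg : Integrable g μ) :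
    Integrable (fun x => min (g x) 0) μ :=
  hg.inf (integrable_zero X ℝ μ)

theorem setIntegral_eq_integral_min_zero (hg : Integrable g μ) (hs : ∀ x ∈ s, g x ≤ 0)
    (hsc : ∀ x ∉ s, 0 ≤ g x) : ∫ x in s, g x ∂μ = ∫ x, min (g x) 0 ∂μ := by
  have hmax : ∫ x in s, max (g x) 0 ∂μ = 0 :=
    setIntegral_eq_zero_of_forall_eq_zero fun x hx => max_eq_right (hs x hx)
  have hmin : ∫ x in s, min (g x) 0 ∂μ = ∫ x, min (g x) 0 ∂μ :=
    setIntegral_eq_integral_of_forall_compl_eq_zero fun x hx => min_eq_right (hsc x hx)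
  calc ∫ x in s, g x ∂μ = ∫ x in s, (max (g x) 0 + min (g x) 0) ∂μ := by
        simp only [max_add_min, add_zero]
    _ = ∫ x, min (g x) 0 ∂μ := by
        rw [integral_add hg.pos_part.integrableOn hg.min_zero.integrableOn, hmax, hmin, zero_add]

theorem integral_abs_eq_sub_two_mul_integral_min_zero (hg : Integrable g μ) :
    ∫ x, |g x| ∂μ = ∫ x, g x ∂μ - 2 * ∫ x, min (g x) 0 ∂μ := by
  rw [← integral_const_mul, ← integral_sub hg (hg.min_zero.const_mul 2)]
  congr 1 with x
  rcases le_total (g x) 0 with h | h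
  · rw [abs_of_nonpos h, min_eq_left h]; ring
  · rw [abs_of_nonneg h, min_eq_right h]; ring

end SignSplit

theorem Real.sqrt_add_mul_sqrt_le {a b : ℝ} (ha : 0 ≤ a) (hb : 0 ≤ b) :
    √(a + b) * √a ≤ a + b / 2 := by
  rw [← Real.sqrt_mul (by positivity)]
  calc √((a + b) * a) ≤ √((a + b / 2) ^ 2) := Real.sqrt_le_sqrt (by nlinarith [sq_nonneg b])
    _ = a + b / 2 := Real.sqrt_sq (by positivity)

section Divergence

variable {ι : Type*} [Fintype ι]

theorem ContinuousLinearMap.apply_eq_sum_single [DecidableEq ι]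
    (L : EuclideanSpace ℝ ι →L[ℝ] ℝ) (v : EuclideanSpace ℝ ι) :
    L v = ∑ i, v i * L (EuclideanSpace.single i 1) := by
  conv_lhs => rw [← (EuclideanSpace.basisFun ι ℝ).sum_repr v]
  simp [map_sum]

noncomputable def divergence [DecidableEq ι] (F : EuclideanSpace ℝ ι → EuclideanSpace ℝ ι)
    (x : EuclideanSpace ℝ ι) : ℝ :=
  ∑ i, fderiv ℝ (fun y => F y i) x (EuclideanSpace.single i 1)

theorem divergence_smul [DecidableEq ι] {f : EuclideanSpace ℝ ι → ℝ}
    {F : EuclideanSpace ℝ ι → EuclideanSpace ℝ ι} {x : EuclideanSpace ℝ ι}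
    (hf : DifferentiableAt ℝ f x) (hF : DifferentiableAt ℝ F x) :
    divergence (fun y => f y • F y) x = f x * divergence F x + fderiv ℝ f x (F x) := by
  have hFi := differentiableAt_euclidean.1 hF
  simp only [divergence, PiLp.smul_apply, smul_eq_mul]
  simp only [fderiv_fun_mul hf (hFi _), add_apply, smul_apply, smul_eq_mul,
    Finset.sum_add_distrib, Finset.mul_sum, (fderiv ℝ f x).apply_eq_sum_single (F x)]

theorem divergence_sq_smul [DecidableEq ι] {u : EuclideanSpace ℝ ι → ℝ}
    {F : EuclideanSpace ℝ ι → EuclideanSpace ℝ ι} {x : EuclideanSpace ℝ ι}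
    (hu : DifferentiableAt ℝ u x) (hF : DifferentiableAt ℝ F x) :
    divergence (fun y => u y ^ 2 • F y) x =
      u x ^ 2 * divergence F x + 2 * (u x * fderiv ℝ u x (F x)) := by
  rw [divergence_smul (hu.fun_pow 2) hF, fderiv_fun_pow 2 hu]
  simp only [smul_apply, smul_eq_mul, nsmul_eq_mul]
  ring

end Divergence

/-- `σ` plays the role of the surface measure of `∂Ω` and `n` that of the outward normal. -/
def GaussGreenFormula {d : ℕ} (Ω : Set (EuclideanSpace ℝ (Fin d)))
    (σ : Measure (EuclideanSpace ℝ (Fin d)))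
    (n : EuclideanSpace ℝ (Fin d) → EuclideanSpace ℝ (Fin d)) : Prop :=
  ∀ F : EuclideanSpace ℝ (Fin d) → EuclideanSpace ℝ (Fin d), ContDiff ℝ 1 F →
    ∫ x in Ω, divergence F x = ∫ x, ⟪n x, F x⟫ ∂σ

theorem GaussGreenFormula.integral_inner_mul_sq {d : ℕ} {Ω : Set (EuclideanSpace ℝ (Fin d))}
    {σ : Measure (EuclideanSpace ℝ (Fin d))}
    {n β : EuclideanSpace ℝ (Fin d) → EuclideanSpace ℝ (Fin d)} {u : EuclideanSpace ℝ (Fin d) → ℝ}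
    (hGG : GaussGreenFormula Ω σ n) (hΩ : MeasurableSet Ω) (hβ : ContDiff ℝ 1 β)
    (hβdiv : ∀ x ∈ Ω, divergence β x = 0) (hu : ContDiff ℝ 1 u) :
    ∫ x, ⟪n x, β x⟫ * u x ^ 2 ∂σ = 2 * ∫ x in Ω, u x * fderiv ℝ u x (β x) := by
  have hdivF : ∀ x ∈ Ω, divergence (fun y => u y ^ 2 • β y) x =
      2 * (u x * fderiv ℝ u x (β x)) := fun x hx => by
    rw [divergence_sq_smul (hu.differentiable one_ne_zero x) (hβ.differentiable one_ne_zero x),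
      hβdiv x hx, mul_zero, zero_add]
  rw [← integral_const_mul, ← setIntegral_congr_fun hΩ hdivF,
    hGG (fun y => u y ^ 2 • β y) ((hu.pow 2).smul hβ)]
  simp only [real_inner_smul_right, mul_comm]

theorem advection_infsup_coercivity_general {d : ℕ}
    (Ω : Set (EuclideanSpace ℝ (Fin d))) (hΩo : IsOpen Ω)
    (σ : Measure (EuclideanSpace ℝ (Fin d)))
    (nv : EuclideanSpace ℝ (Fin d) → EuclideanSpace ℝ (Fin d))
    (hdiv : ∀ F : EuclideanSpace ℝ (Fin d) → EuclideanSpace ℝ (Fin d), ContDiff ℝ 1 F →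
      ∫ x in Ω, (∑ i, fderiv ℝ (fun y => F y i) x (EuclideanSpace.single i 1)) =
        ∫ x, ⟪nv x, F x⟫ ∂σ)
    (β : EuclideanSpace ℝ (Fin d) → EuclideanSpace ℝ (Fin d)) (hβ : ContDiff ℝ 1 β)
    (hβdiv : ∀ x ∈ Ω, (∑ i, fderiv ℝ (fun y => β y i) x (EuclideanSpace.single i 1)) = 0)
    (ρ : EuclideanSpace ℝ (Fin d) → ℝ) (ρ₀ : ℝ) (hρ₀ : 0 < ρ₀) (hρ : ∀ x ∈ Ω, ρ₀ ≤ ρ x)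
    (u : EuclideanSpace ℝ (Fin d) → ℝ) (hu : ContDiff ℝ 1 u)
    (h1 : IntegrableOn (fun x => u x * fderiv ℝ u x (β x)) Ω volume)
    (h2 : IntegrableOn (fun x => ρ x * (u x) ^ 2) Ω volume)
    (h3 : Integrable (fun x => ⟪nv x, β x⟫ * (u x) ^ 2) σ) :
    (∫ x in Ω, u x * (fderiv ℝ u x (β x) + ρ x * u x)) -
        (∫ x in {x | ⟪nv x, β x⟫ < 0}, ⟪nv x, β x⟫ * (u x) ^ 2 ∂σ) =
      (1 / 2) * (∫ x, |⟪nv x, β x⟫| * (u x) ^ 2 ∂σ) + (∫ x in Ω, ρ x * (u x) ^ 2) ∧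
    Real.sqrt ((∫ x in Ω, ρ x * (u x) ^ 2) +
          ∫ x in {x | ⟪nv x, β x⟫ < 0}, |⟪nv x, β x⟫| * (u x) ^ 2 ∂σ) *
        Real.sqrt (∫ x in Ω, ρ x * (u x) ^ 2) ≤
      (∫ x in Ω, u x * (fderiv ℝ u x (β x) + ρ x * u x)) -
        (∫ x in {x | ⟪nv x, β x⟫ < 0}, ⟪nv x, β x⟫ * (u x) ^ 2 ∂σ) := by
  set s := {x | ⟪nv x, β x⟫ < 0}
  have hs : ∀ x ∈ s, ⟪nv x, β x⟫ * u x ^ 2 ≤ 0 := fun x hx =>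
    mul_nonpos_of_nonpos_of_nonneg hx.le (sq_nonneg _)
  have hsc : ∀ x ∉ s, 0 ≤ ⟪nv x, β x⟫ * u x ^ 2 := fun x hx =>
    mul_nonneg (not_lt.1 hx) (sq_nonneg _)
  have hflux := GaussGreenFormula.integral_inner_mul_sq (n := nv) hdiv hΩo.measurableSet hβ
    hβdiv hu
  have hsplit : ∫ x in Ω, u x * (fderiv ℝ u x (β x) + ρ x * u x) =
      (∫ x in Ω, u x * fderiv ℝ u x (β x)) + ∫ x in Ω, ρ x * u x ^ 2 := by
    rw [← integral_add h1 h2]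
    congr 1 with x; ring
  have hA : 0 ≤ ∫ x in Ω, ρ x * u x ^ 2 := setIntegral_nonneg hΩo.measurableSet fun x hx =>
    mul_nonneg (hρ₀.le.trans (hρ x hx)) (sq_nonneg _)
  have hmin := setIntegral_eq_integral_min_zero h3 hs hsc
  have htotal := integral_abs_eq_sub_two_mul_integral_min_zero h3
  have hle := setIntegral_le_integral (s := s) h3.abs (.of_forall fun _ => abs_nonneg _)
  simp only [abs_mul, abs_sq] at htotal hle
  have heq : (∫ x in Ω, u x * (fderiv ℝ u x (β x) + ρ x * u x)) -
      (∫ x in s, ⟪nv x, β x⟫ * u x ^ 2 ∂σ) =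
      1 / 2 * (∫ x, |⟪nv x, β x⟫| * u x ^ 2 ∂σ) + ∫ x in Ω, ρ x * u x ^ 2 := by
    linarith
  refine ⟨heq, heq ▸ ?_⟩
  calc _ ≤ _ := Real.sqrt_add_mul_sqrt_le hA (integral_nonneg fun _ => by positivity)
    _ ≤ _ := by linarith

/-- Coercivity estimate (3.25): with the test tuple `v̂ = (u, tr₋ u)`,
`a(v̂,u) = (1/2)∫_{∂Ω}|n·β|u² + ∫_Ω ρu² ≥ ‖v̂‖_L ‖ρ^{1/2}u‖_{L²(Ω)}`, where
`‖v̂‖_L² = ∫_Ω ρu² + ∫_{Γ₋}|n·β|u²` and `Γ₋`, `Γ₊` are the inflow and outflow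
boundary parts, assumed separated by a positive distance. -/
theorem advection_infsup_coercivity {d : ℕ}
    (Ω : Set (EuclideanSpace ℝ (Fin d))) (hΩo : IsOpen Ω) (hΩb : Bornology.IsBounded Ω)
    (σ : Measure (EuclideanSpace ℝ (Fin d)))
    (nv : EuclideanSpace ℝ (Fin d) → EuclideanSpace ℝ (Fin d))
    (hdiv : ∀ F : EuclideanSpace ℝ (Fin d) → EuclideanSpace ℝ (Fin d), ContDiff ℝ 1 F →
      ∫ x in Ω, (∑ i, fderiv ℝ (fun y => F y i) x (EuclideanSpace.single i 1)) =
        ∫ x, ⟪nv x, F x⟫ ∂σ)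
    (β : EuclideanSpace ℝ (Fin d) → EuclideanSpace ℝ (Fin d)) (hβ : ContDiff ℝ 1 β)
    (hβdiv : ∀ x ∈ Ω, (∑ i, fderiv ℝ (fun y => β y i) x (EuclideanSpace.single i 1)) = 0)
    (ρ : EuclideanSpace ℝ (Fin d) → ℝ) (ρ₀ : ℝ) (hρ₀ : 0 < ρ₀) (hρ : ∀ x ∈ Ω, ρ₀ ≤ ρ x)
    (hsep : ∃ δ > (0 : ℝ), ∀ x ∈ {x | ⟪nv x, β x⟫ < 0}, ∀ y ∈ {y | 0 < ⟪nv y, β y⟫},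
      δ ≤ dist x y)
    (u : EuclideanSpace ℝ (Fin d) → ℝ) (hu : ContDiff ℝ 1 u)
    (h1 : IntegrableOn (fun x => u x * fderiv ℝ u x (β x)) Ω volume)
    (h2 : IntegrableOn (fun x => ρ x * (u x) ^ 2) Ω volume)
    (h3 : Integrable (fun x => ⟪nv x, β x⟫ * (u x) ^ 2) σ) :
    (∫ x in Ω, u x * (fderiv ℝ u x (β x) + ρ x * u x)) -
        (∫ x in {x | ⟪nv x, β x⟫ < 0}, ⟪nv x, β x⟫ * (u x) ^ 2 ∂σ) =
      (1 / 2) * (∫ x, |⟪nv x, β x⟫| * (u x) ^ 2 ∂σ) + (∫ x in Ω, ρ x * (u x) ^ 2) ∧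
    Real.sqrt ((∫ x in Ω, ρ x * (u x) ^ 2) +
          ∫ x in {x | ⟪nv x, β x⟫ < 0}, |⟪nv x, β x⟫| * (u x) ^ 2 ∂σ) *
        Real.sqrt (∫ x in Ω, ρ x * (u x) ^ 2) ≤
      (∫ x in Ω, u x * (fderiv ℝ u x (β x) + ρ x * u x)) -
        (∫ x in {x | ⟪nv x, β x⟫ < 0}, ⟪nv x, β x⟫ * (u x) ^ 2 ∂σ) :=
  advection_infsup_coercivity_general Ω hΩo σ nv hdiv β hβ hβdiv ρ ρ₀ hρ₀ hρ u hu h1 h2 h3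
end

section
/- Let ξ ∈ C¹(Q̄)^{d+1} with tr_{Q₀}ξ = 0 and tr_Σ⁻ξ = 0, where Q = Ω × (0,τ). Then ∫_Q ξᵀ (τ T ξ) ≥ 0, and consequently ‖ξ‖²_{L²(Q)^{d+1}} ≤ ∫_Q ξᵀ(ξ + τTξ) ≤ ‖ξ‖_{L²(Q)^{d+1}} ‖ξ + τTξ‖_{L²(Q)^{d+1}}, so that ‖ξ‖_{L²(Q)^{d+1}} ≤ ‖ξ + τTξ‖_{L²(Q)^{d+1}}. -/
/-!
Dotting `Tξ` with `ξ` gives the energy balance `ξ·Tξ = ∂ₜ(|ξ|²/2) + ∇·(c₀ ξ₂ ξ₁)`, so by Green's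
formula `∫_Q ξ·Tξ` is the energy at time `τ`, minus the energy at time `0`, plus the boundary
flux `∫_Σ c₀ ξ₂ (n·ξ₁)`. The initial energy vanishes, and where the inflow trace vanishes we have
`ξ₂ = n·ξ₁`, so the flux density `c₀ (n·ξ₁)²` is nonnegative. Hence
`‖ξ‖² ≤ ∫_Q ξ·(ξ + τTξ)`, and the pointwise and integral Cauchy–Schwarz inequalities bound the
right-hand side by `‖ξ‖ ‖ξ + τTξ‖`.
-/

open MeasureTheory RealInnerProductSpace

variable {d : ℕ}

/-- Time derivative of a vector-valued space–time field. -/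
noncomputable def dtVec (ξ₁ : ℝ × EuclideanSpace ℝ (Fin d) → EuclideanSpace ℝ (Fin d))
    (p : ℝ × EuclideanSpace ℝ (Fin d)) : EuclideanSpace ℝ (Fin d) :=
  fderiv ℝ ξ₁ p (1, 0)

/-- Time derivative of a scalar space–time field. -/
noncomputable def dtScal (ξ₂ : ℝ × EuclideanSpace ℝ (Fin d) → ℝ)
    (p : ℝ × EuclideanSpace ℝ (Fin d)) : ℝ :=
  fderiv ℝ ξ₂ p (1, 0)

/-- Spatial gradient of a scalar space–time field. -/
noncomputable def gradx (ξ₂ : ℝ × EuclideanSpace ℝ (Fin d) → ℝ)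
    (p : ℝ × EuclideanSpace ℝ (Fin d)) : EuclideanSpace ℝ (Fin d) :=
  gradient (fun x => ξ₂ (p.1, x)) p.2

/-- Spatial divergence of a vector-valued space–time field. -/
noncomputable def divx (ξ₁ : ℝ × EuclideanSpace ℝ (Fin d) → EuclideanSpace ℝ (Fin d))
    (p : ℝ × EuclideanSpace ℝ (Fin d)) : ℝ :=
  ∑ i, fderiv ℝ (fun x => ξ₁ (p.1, x) i) p.2 (EuclideanSpace.single i 1)

theorem inner_add_mul_le_sqrt_mul_sqrt {E : Type*} [NormedAddCommGroup E]
    [InnerProductSpace ℝ E] (u v : E) (x y : ℝ) :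
    ⟪u, v⟫ + x * y ≤ √(‖u‖ ^ 2 + x ^ 2) * √(‖v‖ ^ 2 + y ^ 2) := by
  have h := real_inner_le_norm (WithLp.toLp 2 (u, x)) (WithLp.toLp 2 (v, y))
  simpa [WithLp.prod_inner_apply, WithLp.prod_norm_eq_of_L2, mul_comm x] using h

theorem integral_le_sqrt_mul_sqrt {α : Type*} [MeasurableSpace α] {μ : Measure α}
    {f g h : α → ℝ} (hf : Integrable f μ) (hg : Integrable g μ) (hh : Integrable h μ)
    (hg₀ : 0 ≤ g) (hh₀ : 0 ≤ h) (hfgh : ∀ x, f x ≤ √(g x) * √(h x)) :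
    ∫ x, f x ∂μ ≤ √(∫ x, g x ∂μ) * √(∫ x, h x ∂μ) := by
  have memLp_sqrt : ∀ {k : α → ℝ}, Integrable k μ → 0 ≤ k → MemLp (fun x => √(k x)) 2 μ :=
    fun hk hk₀ => (memLp_two_iff_integrable_sq
      (Real.continuous_sqrt.comp_aestronglyMeasurable hk.aestronglyMeasurable)).2
      (by simpa [Real.sq_sqrt (hk₀ _)] using hk)
  have sqrt_rpow_two : ∀ {k : α → ℝ}, 0 ≤ k → ∀ x, √(k x) ^ (2 : ℝ) = k x :=
    fun hk₀ x => by rw [Real.rpow_two, Real.sq_sqrt (hk₀ x)]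
  calc ∫ x, f x ∂μ ≤ ∫ x, √(g x) * √(h x) ∂μ :=
        integral_mono hf ((memLp_sqrt hg hg₀).integrable_mul (memLp_sqrt hh hh₀)) hfgh
    _ ≤ (∫ x, √(g x) ^ (2 : ℝ) ∂μ) ^ (1 / 2 : ℝ) * (∫ x, √(h x) ^ (2 : ℝ) ∂μ) ^ (1 / 2 : ℝ) :=
        integral_mul_le_Lp_mul_Lq_of_nonneg Real.HolderConjugate.two_two
          (.of_forall fun _ => Real.sqrt_nonneg _) (.of_forall fun _ => Real.sqrt_nonneg _)
          (by simpa using memLp_sqrt hg hg₀) (by simpa using memLp_sqrt hh hh₀)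
    _ = √(∫ x, g x ∂μ) * √(∫ x, h x ∂μ) := by
        simp only [sqrt_rpow_two hg₀, sqrt_rpow_two hh₀, ← Real.sqrt_eq_rpow]

theorem sqrt_le_sqrt_of_le_sqrt_mul_sqrt {a b : ℝ} (ha : 0 ≤ a) (h : a ≤ √a * √b) :
    √a ≤ √b := by
  by_contra! hlt
  nlinarith [Real.mul_self_sqrt ha, Real.sqrt_nonneg b]

theorem inner_flux_nonneg_of_inflow_trace_eq_zero {E : Type*} [NormedAddCommGroup E]
    [InnerProductSpace ℝ E] {c₀ y : ℝ} {n u : E} (hc₀ : 0 < c₀)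
    (h : √(c₀ / 2) * (y - ⟪n, u⟫) = 0) : 0 ≤ ⟪n, (c₀ * y) • u⟫ := by
  have hy : y = ⟪n, u⟫ := by
    have := (mul_eq_zero.1 h).resolve_left (Real.sqrt_pos.2 (by positivity)).ne'
    linarith
  rw [real_inner_smul_right, ← hy]
  nlinarith [sq_nonneg y]

theorem fderiv_slice_apply {E F G : Type*} [NormedAddCommGroup E] [NormedSpace ℝ E]
    [NormedAddCommGroup F] [NormedSpace ℝ F] [NormedAddCommGroup G] [NormedSpace ℝ G]
    {f : E × F → G} {p : E × F} (hf : DifferentiableAt ℝ f p) (v : F) :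
    fderiv ℝ (fun x => f (p.1, x)) p.2 v = fderiv ℝ f p (0, v) := by
  have hslice : HasFDerivAt (fun x : F => (p.1, x)) ((0 : F →L[ℝ] E).prod (.id ℝ F)) p.2 :=
    (hasFDerivAt_const p.1 p.2).prodMk (hasFDerivAt_id p.2)
  have h : HasFDerivAt (fun x => f (p.1, x)) _ p.2 := hf.hasFDerivAt.comp p.2 hslice
  rw [h.fderiv]
  rfl

theorem sum_mul_apply_zero_single {E : Type*} [NormedAddCommGroup E] [NormedSpace ℝ E]
    (L : E × EuclideanSpace ℝ (Fin d) →L[ℝ] ℝ)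
    (v : EuclideanSpace ℝ (Fin d)) :
    ∑ i, v i * L (0, EuclideanSpace.single i 1) = L (0, v) := by
  have h := congrArg (L.comp (.inr ℝ E _)) ((EuclideanSpace.basisFun (Fin d) ℝ).sum_repr v)
  simpa [map_sum] using h

section SpaceTime

variable {φ ξ₂ : ℝ × EuclideanSpace ℝ (Fin d) → ℝ}
  {F ξ₁ : ℝ × EuclideanSpace ℝ (Fin d) → EuclideanSpace ℝ (Fin d)}
  {p : ℝ × EuclideanSpace ℝ (Fin d)}

theorem inner_gradx (hφ : DifferentiableAt ℝ φ p) (v : EuclideanSpace ℝ (Fin d)) :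
    ⟪v, gradx φ p⟫ = fderiv ℝ φ p (0, v) := by
  rw [gradx, real_inner_comm, inner_gradient_left, fderiv_slice_apply hφ]

theorem divx_eq_sum_fderiv (hF : DifferentiableAt ℝ F p) :
    divx F p = ∑ i, fderiv ℝ F p (0, EuclideanSpace.single i 1) i := by
  refine Finset.sum_congr rfl fun i _ => ?_
  have hFi : HasFDerivAt (fun q => F q i) ((EuclideanSpace.proj i).comp (fderiv ℝ F p)) p :=
    ((EuclideanSpace.proj (𝕜 := ℝ) i).hasFDerivAt.comp p hF.hasFDerivAt : _)
  rw [fderiv_slice_apply hFi.differentiableAt, hFi.fderiv]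
  rfl

theorem divx_smul (hφ : DifferentiableAt ℝ φ p) (hF : DifferentiableAt ℝ F p) :
    divx (fun q => φ q • F q) p = ⟪F p, gradx φ p⟫ + φ p * divx F p := by
  have hφF : DifferentiableAt ℝ (fun q => φ q • F q) p := hφ.smul hF
  rw [divx_eq_sum_fderiv hφF, divx_eq_sum_fderiv hF, inner_gradx hφ,
    fderiv_fun_smul hφ hF, ← sum_mul_apply_zero_single, Finset.mul_sum,
    ← Finset.sum_add_distrib]
  refine Finset.sum_congr rfl fun i _ => ?_
  simp only [add_apply, smul_apply, ContinuousLinearMap.smulRight_apply, PiLp.add_apply,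
    PiLp.smul_apply, smul_eq_mul]
  ring

theorem dtScal_half_energy (hξ₁ : DifferentiableAt ℝ ξ₁ p) (hξ₂ : DifferentiableAt ℝ ξ₂ p) :
    dtScal (fun q => (‖ξ₁ q‖ ^ 2 + ξ₂ q ^ 2) / 2) p =
      ⟪ξ₁ p, dtVec ξ₁ p⟫ + ξ₂ p * dtScal ξ₂ p := by
  have h : HasFDerivAt (fun q => (‖ξ₁ q‖ ^ 2 + ξ₂ q ^ 2) / 2) _ p :=
    (hξ₁.hasFDerivAt.norm_sq.add (hξ₂.hasFDerivAt.pow 2)).mul_const 2⁻¹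
  rw [dtScal, h.fderiv]
  simp only [smul_add, add_apply, smul_apply, ContinuousLinearMap.comp_apply,
    coe_innerSL_apply, smul_eq_mul, dtVec, dtScal]
  ring

theorem dtScal_energy_add_divx_flux (c₀ : ℝ) (hξ₁ : DifferentiableAt ℝ ξ₁ p)
    (hξ₂ : DifferentiableAt ℝ ξ₂ p) :
    dtScal (fun q => (‖ξ₁ q‖ ^ 2 + ξ₂ q ^ 2) / 2) p + divx (fun q => (c₀ * ξ₂ q) • ξ₁ q) p =
      ⟪ξ₁ p, dtVec ξ₁ p + c₀ • gradx ξ₂ p⟫ + ξ₂ p * (dtScal ξ₂ p + c₀ * divx ξ₁ p) := by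
  have hcξ₂ : DifferentiableAt ℝ (fun q => c₀ * ξ₂ q) p := hξ₂.const_mul c₀
  rw [dtScal_half_energy hξ₁ hξ₂, divx_smul hcξ₂ hξ₁, inner_gradx hcξ₂, inner_add_right,
    real_inner_smul_right, inner_gradx hξ₂, fderiv_const_mul hξ₂]
  simp only [smul_apply, smul_eq_mul]
  ring

theorem integral_inner_acoustic_nonneg {Ω : Set (EuclideanSpace ℝ (Fin d))}
    {σ : Measure (EuclideanSpace ℝ (Fin d))}
    {nv : EuclideanSpace ℝ (Fin d) → EuclideanSpace ℝ (Fin d)} {τ c₀ : ℝ} (hc₀ : 0 < c₀)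
    (hdiv : ∀ (f : ℝ × EuclideanSpace ℝ (Fin d) → ℝ)
        (F : ℝ × EuclideanSpace ℝ (Fin d) → EuclideanSpace ℝ (Fin d)),
      ContDiff ℝ 1 f → ContDiff ℝ 1 F →
      ∫ p in Set.Ioo 0 τ ×ˢ Ω, (dtScal f p + divx F p) =
        (∫ x in Ω, f (τ, x)) - (∫ x in Ω, f (0, x)) +
          ∫ t in Set.Ioo 0 τ, ∫ x, ⟪nv x, F (t, x)⟫ ∂σ)
    (hξ₁ : ContDiff ℝ 1 ξ₁) (hξ₂ : ContDiff ℝ 1 ξ₂)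
    (hQ0 : ∀ x ∈ Ω, ξ₁ (0, x) = 0 ∧ ξ₂ (0, x) = 0)
    (htrSigma : ∀ t ∈ Set.Ioo (0 : ℝ) τ, ∀ᵐ x ∂σ,
      √(c₀ / 2) * (ξ₂ (t, x) - ⟪nv x, ξ₁ (t, x)⟫) = 0) :
    0 ≤ ∫ p in Set.Ioo 0 τ ×ˢ Ω,
      (⟪ξ₁ p, dtVec ξ₁ p + c₀ • gradx ξ₂ p⟫ + ξ₂ p * (dtScal ξ₂ p + c₀ * divx ξ₁ p)) := by
  have hgreen := hdiv (fun q => (‖ξ₁ q‖ ^ 2 + ξ₂ q ^ 2) / 2) (fun q => (c₀ * ξ₂ q) • ξ₁ q)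
    (((hξ₁.norm_sq ℝ).add (hξ₂.pow 2)).div_const 2) ((contDiff_const.mul hξ₂).smul hξ₁)
  simp only [dtScal_energy_add_divx_flux c₀ (hξ₁.differentiable one_ne_zero _)
    (hξ₂.differentiable one_ne_zero _)] at hgreen
  have hinitial : ∫ x in Ω, (‖ξ₁ (0, x)‖ ^ 2 + ξ₂ (0, x) ^ 2) / 2 = 0 :=
    setIntegral_eq_zero_of_forall_eq_zero fun x hx => by simp [hQ0 x hx]
  have hfinal : 0 ≤ ∫ x in Ω, (‖ξ₁ (τ, x)‖ ^ 2 + ξ₂ (τ, x) ^ 2) / 2 :=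
    integral_nonneg fun _ => by positivity
  have hflux : 0 ≤ ∫ t in Set.Ioo 0 τ, ∫ x, ⟪nv x, (c₀ * ξ₂ (t, x)) • ξ₁ (t, x)⟫ ∂σ :=
    setIntegral_nonneg measurableSet_Ioo fun t ht => integral_nonneg_of_ae <|
      (htrSigma t ht).mono fun x hx => inner_flux_nonneg_of_inflow_trace_eq_zero hc₀ hx
  linarith

end SpaceTime

theorem acoustic_dissipativity_estimate_general (Ω : Set (EuclideanSpace ℝ (Fin d)))
    (σ : Measure (EuclideanSpace ℝ (Fin d)))
    (nv : EuclideanSpace ℝ (Fin d) → EuclideanSpace ℝ (Fin d))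
    (τ c₀ : ℝ) (hτ : 0 < τ) (hc₀ : 0 < c₀)
    (hdiv : ∀ (f : ℝ × EuclideanSpace ℝ (Fin d) → ℝ)
        (F : ℝ × EuclideanSpace ℝ (Fin d) → EuclideanSpace ℝ (Fin d)),
      ContDiff ℝ 1 f → ContDiff ℝ 1 F →
      ∫ p in Set.Ioo 0 τ ×ˢ Ω, (dtScal f p + divx F p) =
        (∫ x in Ω, f (τ, x)) - (∫ x in Ω, f (0, x)) +
          ∫ t in Set.Ioo 0 τ, ∫ x, ⟪nv x, F (t, x)⟫ ∂σ)
    (ξ₁ : ℝ × EuclideanSpace ℝ (Fin d) → EuclideanSpace ℝ (Fin d)) (hξ₁ : ContDiff ℝ 1 ξ₁)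
    (ξ₂ : ℝ × EuclideanSpace ℝ (Fin d) → ℝ) (hξ₂ : ContDiff ℝ 1 ξ₂)
    (hQ0 : ∀ x ∈ Ω, ξ₁ (0, x) = 0 ∧ ξ₂ (0, x) = 0)
    (htrSigma : ∀ t ∈ Set.Ioo (0 : ℝ) τ, ∀ᵐ x ∂σ,
      Real.sqrt (c₀ / 2) * (ξ₂ (t, x) - ⟪nv x, ξ₁ (t, x)⟫) = 0)
    (hint1 : IntegrableOn (fun p => ‖ξ₁ p‖ ^ 2 + (ξ₂ p) ^ 2) (Set.Ioo 0 τ ×ˢ Ω) volume)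
    (hint2 : IntegrableOn (fun p =>
      ⟪ξ₁ p, dtVec ξ₁ p + c₀ • gradx ξ₂ p⟫ +
        ξ₂ p * (dtScal ξ₂ p + c₀ * divx ξ₁ p)) (Set.Ioo 0 τ ×ˢ Ω) volume)
    (hint3 : IntegrableOn (fun p =>
      ‖ξ₁ p + τ • (dtVec ξ₁ p + c₀ • gradx ξ₂ p)‖ ^ 2 +
        (ξ₂ p + τ * (dtScal ξ₂ p + c₀ * divx ξ₁ p)) ^ 2) (Set.Ioo 0 τ ×ˢ Ω) volume) :
    0 ≤ τ * ∫ p in Set.Ioo 0 τ ×ˢ Ω,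
        (⟪ξ₁ p, dtVec ξ₁ p + c₀ • gradx ξ₂ p⟫ +
          ξ₂ p * (dtScal ξ₂ p + c₀ * divx ξ₁ p)) ∧
    (∫ p in Set.Ioo 0 τ ×ˢ Ω, (‖ξ₁ p‖ ^ 2 + (ξ₂ p) ^ 2)) ≤
      ∫ p in Set.Ioo 0 τ ×ˢ Ω, ((‖ξ₁ p‖ ^ 2 + (ξ₂ p) ^ 2) +
        τ * (⟪ξ₁ p, dtVec ξ₁ p + c₀ • gradx ξ₂ p⟫ +
          ξ₂ p * (dtScal ξ₂ p + c₀ * divx ξ₁ p))) ∧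
    (∫ p in Set.Ioo 0 τ ×ˢ Ω, ((‖ξ₁ p‖ ^ 2 + (ξ₂ p) ^ 2) +
        τ * (⟪ξ₁ p, dtVec ξ₁ p + c₀ • gradx ξ₂ p⟫ +
          ξ₂ p * (dtScal ξ₂ p + c₀ * divx ξ₁ p)))) ≤
      Real.sqrt (∫ p in Set.Ioo 0 τ ×ˢ Ω, (‖ξ₁ p‖ ^ 2 + (ξ₂ p) ^ 2)) *
        Real.sqrt (∫ p in Set.Ioo 0 τ ×ˢ Ω,
          (‖ξ₁ p + τ • (dtVec ξ₁ p + c₀ • gradx ξ₂ p)‖ ^ 2 +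
            (ξ₂ p + τ * (dtScal ξ₂ p + c₀ * divx ξ₁ p)) ^ 2)) ∧
    Real.sqrt (∫ p in Set.Ioo 0 τ ×ˢ Ω, (‖ξ₁ p‖ ^ 2 + (ξ₂ p) ^ 2)) ≤
      Real.sqrt (∫ p in Set.Ioo 0 τ ×ˢ Ω,
        (‖ξ₁ p + τ • (dtVec ξ₁ p + c₀ • gradx ξ₂ p)‖ ^ 2 +
          (ξ₂ p + τ * (dtScal ξ₂ p + c₀ * divx ξ₁ p)) ^ 2)) := by
  have hE := integral_inner_acoustic_nonneg hc₀ hdiv hξ₁ hξ₂ hQ0 htrSigma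
  have hτE := mul_nonneg hτ.le hE
  have hsplit := integral_add hint1 (hint2.const_mul τ)
  rw [integral_const_mul] at hsplit
  have hCS := integral_le_sqrt_mul_sqrt (hint1.fun_add (hint2.const_mul τ)) hint1 hint3
    (fun _ => by positivity) (fun _ => by positivity) fun p => by
      have h := inner_add_mul_le_sqrt_mul_sqrt (ξ₁ p) (ξ₁ p + τ • (dtVec ξ₁ p + c₀ • gradx ξ₂ p))
        (ξ₂ p) (ξ₂ p + τ * (dtScal ξ₂ p + c₀ * divx ξ₁ p))
      rw [inner_add_right, real_inner_smul_right, real_inner_self_eq_norm_sq] at h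
      linarith
  exact ⟨hτE, by linarith, hCS,
    sqrt_le_sqrt_of_le_sqrt_mul_sqrt (integral_nonneg fun _ => by positivity) (by linarith)⟩

/-- Estimate (5.63)–(5.65): if `ξ` vanishes at `t = 0` and has vanishing inflow trace
`tr⁻ξ = √(c₀/2)(ξ₂ − n·ξ₁) = 0` on `Σ`, then `∫_Q ξᵀ(τTξ) ≥ 0`, whence
`‖ξ‖² ≤ ∫_Q ξᵀ(ξ + τTξ) ≤ ‖ξ‖ ‖ξ + τTξ‖` and `‖ξ‖_{L²(Q)} ≤ ‖ξ + τTξ‖_{L²(Q)}`. -/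
theorem acoustic_dissipativity_estimate (Ω : Set (EuclideanSpace ℝ (Fin d)))
    (hΩo : IsOpen Ω) (hΩb : Bornology.IsBounded Ω)
    (σ : Measure (EuclideanSpace ℝ (Fin d)))
    (nv : EuclideanSpace ℝ (Fin d) → EuclideanSpace ℝ (Fin d))
    (τ c₀ : ℝ) (hτ : 0 < τ) (hc₀ : 0 < c₀)
    (hdiv : ∀ (f : ℝ × EuclideanSpace ℝ (Fin d) → ℝ)
        (F : ℝ × EuclideanSpace ℝ (Fin d) → EuclideanSpace ℝ (Fin d)),
      ContDiff ℝ 1 f → ContDiff ℝ 1 F →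
      ∫ p in Set.Ioo 0 τ ×ˢ Ω, (dtScal f p + divx F p) =
        (∫ x in Ω, f (τ, x)) - (∫ x in Ω, f (0, x)) +
          ∫ t in Set.Ioo 0 τ, ∫ x, ⟪nv x, F (t, x)⟫ ∂σ)
    (ξ₁ : ℝ × EuclideanSpace ℝ (Fin d) → EuclideanSpace ℝ (Fin d)) (hξ₁ : ContDiff ℝ 1 ξ₁)
    (ξ₂ : ℝ × EuclideanSpace ℝ (Fin d) → ℝ) (hξ₂ : ContDiff ℝ 1 ξ₂)
    (hQ0 : ∀ x ∈ Ω, ξ₁ (0, x) = 0 ∧ ξ₂ (0, x) = 0)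
    (htrSigma : ∀ t ∈ Set.Ioo (0 : ℝ) τ, ∀ᵐ x ∂σ,
      Real.sqrt (c₀ / 2) * (ξ₂ (t, x) - ⟪nv x, ξ₁ (t, x)⟫) = 0)
    (hint1 : IntegrableOn (fun p => ‖ξ₁ p‖ ^ 2 + (ξ₂ p) ^ 2) (Set.Ioo 0 τ ×ˢ Ω) volume)
    (hint2 : IntegrableOn (fun p =>
      ⟪ξ₁ p, dtVec ξ₁ p + c₀ • gradx ξ₂ p⟫ +
        ξ₂ p * (dtScal ξ₂ p + c₀ * divx ξ₁ p)) (Set.Ioo 0 τ ×ˢ Ω) volume)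
    (hint3 : IntegrableOn (fun p =>
      ‖ξ₁ p + τ • (dtVec ξ₁ p + c₀ • gradx ξ₂ p)‖ ^ 2 +
        (ξ₂ p + τ * (dtScal ξ₂ p + c₀ * divx ξ₁ p)) ^ 2) (Set.Ioo 0 τ ×ˢ Ω) volume) :
    0 ≤ τ * ∫ p in Set.Ioo 0 τ ×ˢ Ω,
        (⟪ξ₁ p, dtVec ξ₁ p + c₀ • gradx ξ₂ p⟫ +
          ξ₂ p * (dtScal ξ₂ p + c₀ * divx ξ₁ p)) ∧
    (∫ p in Set.Ioo 0 τ ×ˢ Ω, (‖ξ₁ p‖ ^ 2 + (ξ₂ p) ^ 2)) ≤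
      ∫ p in Set.Ioo 0 τ ×ˢ Ω, ((‖ξ₁ p‖ ^ 2 + (ξ₂ p) ^ 2) +
        τ * (⟪ξ₁ p, dtVec ξ₁ p + c₀ • gradx ξ₂ p⟫ +
          ξ₂ p * (dtScal ξ₂ p + c₀ * divx ξ₁ p))) ∧
    (∫ p in Set.Ioo 0 τ ×ˢ Ω, ((‖ξ₁ p‖ ^ 2 + (ξ₂ p) ^ 2) +
        τ * (⟪ξ₁ p, dtVec ξ₁ p + c₀ • gradx ξ₂ p⟫ +
          ξ₂ p * (dtScal ξ₂ p + c₀ * divx ξ₁ p)))) ≤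
      Real.sqrt (∫ p in Set.Ioo 0 τ ×ˢ Ω, (‖ξ₁ p‖ ^ 2 + (ξ₂ p) ^ 2)) *
        Real.sqrt (∫ p in Set.Ioo 0 τ ×ˢ Ω,
          (‖ξ₁ p + τ • (dtVec ξ₁ p + c₀ • gradx ξ₂ p)‖ ^ 2 +
            (ξ₂ p + τ * (dtScal ξ₂ p + c₀ * divx ξ₁ p)) ^ 2)) ∧
    Real.sqrt (∫ p in Set.Ioo 0 τ ×ˢ Ω, (‖ξ₁ p‖ ^ 2 + (ξ₂ p) ^ 2)) ≤
      Real.sqrt (∫ p in Set.Ioo 0 τ ×ˢ Ω,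
        (‖ξ₁ p + τ • (dtVec ξ₁ p + c₀ • gradx ξ₂ p)‖ ^ 2 +
          (ξ₂ p + τ * (dtScal ξ₂ p + c₀ * divx ξ₁ p)) ^ 2)) :=
  acoustic_dissipativity_estimate_general Ω σ nv τ c₀ hτ hc₀ hdiv ξ₁ hξ₁ ξ₂ hξ₂ hQ0 htrSigma hint1
    hint2 hint3
end
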